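/- arXiv:math/0402370 — 5 statements merged into one kernel-verified Lean document; each statement's English description precedes it below -/
import Mathlib

section
/- Let A be a Cohen-Macaulay Noetherian local ring (not necessarily a domain) and let 0 → Aⁿ →(ρ₁;ρ₂) A^{2n} →(τ₁ τ₂) Aⁿ → M → 0 be an exact sequence of finite free A-modules, where τ₁, τ₂, ρ₁, ρ₂ are n×n matrices over A. Then there exists an invertible matrix P ∈ GL_{2n}(A) such that, writing (τ₁' τ₂') = (τ₁ τ₂)·P, the determinant det(τ₁') lies outside every associated prime of A, i.e. det(τ₁') is a nonzerodivisor on A. -/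
open Matrix IsLocalRing

def depthGE (A : Type) [CommRing A] (I : Ideal A) (M : Type) [AddCommGroup M] [Module A M]
    (n : ℕ) : Prop :=
  ∃ rs : List A, rs.length = n ∧ (∀ x ∈ rs, x ∈ I) ∧ RingTheory.Sequence.IsRegular M rs

def IsCMLocalRing (A : Type) [CommRing A] [IsLocalRing A] : Prop :=
  ∃ rs : List A, (∀ x ∈ rs, x ∈ maximalIdeal A) ∧ RingTheory.Sequence.IsRegular A rs ∧
    (rs.length : WithBot ℕ∞) = ringKrullDim A

def IsFreeRes₂ (A : Type) [CommRing A] {R : Type} [AddCommGroup R] [Module A R]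
    {ι₀ ι₁ ι₂ : Type} [Fintype ι₀] [Fintype ι₁] [Fintype ι₂]
    (φ : Matrix ι₀ ι₁ A) (ψ : Matrix ι₁ ι₂ A) (p : (ι₀ → A) →ₗ[A] R) : Prop :=
  Function.Surjective p ∧ LinearMap.ker p = LinearMap.range φ.mulVecLin ∧
    LinearMap.ker φ.mulVecLin = LinearMap.range ψ.mulVecLin ∧
    LinearMap.ker ψ.mulVecLin = ⊥

/-!
Let `q = ann x` be an associated prime of `A` and `κ(q)` its residue field. Clearing denominators
and multiplying by `x` transports exactness of `0 → Aⁿ → A²ⁿ → Aⁿ` at `A²ⁿ` to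
`ker (τ ⊗ κ(q)) ⊆ im (ρ ⊗ κ(q))`, so `τ ⊗ κ(q)` has rank `n`. Prime avoidance over the finitely many
associated primes and the maximal ideal `m` then produces, one column at a time, vectors
`c₁, …, cₙ ∈ A²ⁿ` whose images `τ cᵢ` are independent over every `κ(q)` and which are themselves
independent modulo `m`. The latter complete to an invertible `P`, and `det (τ (c₁ ⋯ cₙ))` then
avoids every associated prime, which for a Noetherian ring means it is a nonzerodivisor.
-/

theorem RingHom.comp_mulVec {R S m n : Type*} [NonAssocSemiring R] [NonAssocSemiring S]
    [Fintype n] (f : R →+* S) (M : Matrix m n R) (v : n → R) : f ∘ (M *ᵥ v) = M.map f *ᵥ (f ∘ v) :=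
  funext (f.map_mulVec M v)

theorem RingHom.comp_vecMul {R S m n : Type*} [NonAssocSemiring R] [NonAssocSemiring S]
    [Fintype m] (f : R →+* S) (M : Matrix m n R) (v : m → R) : f ∘ (v ᵥ* M) = (f ∘ v) ᵥ* M.map f :=
  funext (f.map_vecMul M v)

theorem Matrix.exists_vecMul_eq_zero_dotProduct_ne_zero {K ι m : Type*} [Field K] [Fintype ι]
    [Fintype m] (R : Matrix ι m K) {y : ι → K} (hy : y ∉ LinearMap.range R.mulVecLin) :
    ∃ l : ι → K, l ᵥ* R = 0 ∧ l ⬝ᵥ y ≠ 0 := by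
  classical
  obtain ⟨φ, hφy, hφR⟩ := Submodule.exists_dual_map_eq_bot_of_notMem hy inferInstance
  obtain ⟨l, rfl⟩ := (dotProductEquiv K ι).surjective φ
  refine ⟨l, funext fun j => ?_, by simpa using hφy⟩
  have h := Submodule.mem_map_of_mem (f := dotProductEquiv K ι l)
    (LinearMap.mem_range_self R.mulVecLin (Pi.single j 1))
  rw [hφR, Submodule.mem_bot] at h
  simpa [vecMul_apply] using h

theorem Submodule.span_range_ne_top_of_lt_finrank {K V : Type*} [DivisionRing K] [AddCommGroup V]
    [Module K V] {k : ℕ} (v : Fin k → V) (hk : k < Module.finrank K V) :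
    Submodule.span K (Set.range v) ≠ ⊤ := fun h => by
  have := finrank_range_le_card (R := K) v
  rw [Set.finrank, h, finrank_top, Fintype.card_fin] at this
  omega

theorem LinearIndependent.comp_fin_snoc {K V W : Type*} [DivisionRing K] [AddCommGroup V]
    [Module K V] {k : ℕ} {c : Fin k → W} {d : W} (g : W → V) (hc : LinearIndependent K (g ∘ c))
    (hd : g d ∉ Submodule.span K (Set.range (g ∘ c))) : LinearIndependent K (g ∘ Fin.snoc c d) := by
  rw [Fin.comp_snoc, linearIndependent_finSnoc]
  exact ⟨hc, hd⟩

theorem LinearIndependent.exists_linearIndependent_sumElim {K V κ₁ κ₂ : Type*} [DivisionRing K]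
    [AddCommGroup V] [Module K V] [FiniteDimensional K V] [Fintype κ₁] [Fintype κ₂]
    {v : κ₁ → V} (hv : LinearIndependent K v)
    (hcard : Fintype.card κ₁ + Fintype.card κ₂ = Module.finrank K V) :
    ∃ w : κ₂ → V, LinearIndependent K (Sum.elim v w) := by
  obtain ⟨W, hW⟩ := (Submodule.span K (Set.range v)).exists_isCompl
  have hWrank : Module.finrank K W = Fintype.card κ₂ := by
    have := Submodule.finrank_add_eq_of_isCompl hW
    rw [finrank_span_eq_card hv] at this
    omega
  let b := (Module.finBasisOfFinrankEq K W hWrank).reindex (Fintype.equivFin κ₂).symm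
  refine ⟨W.subtype ∘ b, hv.sum_type (b.linearIndependent.map' _ W.ker_subtype) ?_⟩
  refine hW.disjoint.mono_right (Submodule.span_le.2 ?_)
  rintro _ ⟨j, rfl⟩
  exact (b j).2

theorem Ideal.det_notMem_of_linearIndependent_col {A κ : Type*} [CommRing A] [Fintype κ]
    [DecidableEq κ] (p : Ideal A) [p.IsPrime] {N : Matrix κ κ A}
    (hN : LinearIndependent p.ResidueField (N.map (algebraMap A p.ResidueField)).col) :
    N.det ∉ p := by
  rw [← Ideal.algebraMap_residueField_eq_zero, RingHom.map_det, RingHom.mapMatrix_apply, ← Ne,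
    ← isUnit_iff_ne_zero, ← isUnit_iff_isUnit_det]
  exact linearIndependent_cols_iff_isUnit.1 hN

section PrimeAvoidance

variable {A M : Type*} [CommRing A] [AddCommGroup M] [Module A M]

theorem exists_forall_notMem_of_saturated (S : Finset (PrimeSpectrum A))
    (U : PrimeSpectrum A → Submodule A M)
    (hsmul : ∀ p ∈ S, ∀ a ∈ p.asIdeal, ∀ z : M, a • z ∈ U p)
    (hsat : ∀ p ∈ S, ∀ a ∉ p.asIdeal, ∀ z : M, a • z ∈ U p → z ∈ U p)
    (hne : ∀ p ∈ S, U p ≠ ⊤) :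
    ∃ c : M, ∀ p ∈ S, c ∉ U p := by
  classical
  induction S using Finset.strongInduction with
  | _ S ih =>
  rcases S.eq_empty_or_nonempty with rfl | hS
  · exact ⟨0, by simp⟩
  obtain ⟨p₀, hmin⟩ := Finset.exists_minimal hS
  have hp₀ : p₀ ∈ S := hmin.prop
  have mem_erase {p} (hp : p ∈ S.erase p₀) : p ∈ S := Finset.mem_of_mem_erase hp
  obtain ⟨c, hc⟩ := ih (S.erase p₀) (S.erase_ssubset hp₀)
    (fun p hp => hsmul p (mem_erase hp)) (fun p hp => hsat p (mem_erase hp))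
    (fun p hp => hne p (mem_erase hp))
  by_cases hc₀ : c ∉ U p₀
  · refine ⟨c, fun p hp => ?_⟩
    rcases eq_or_ne p p₀ with rfl | h
    exacts [hc₀, hc p (Finset.mem_erase.2 ⟨h, hp⟩)]
  -- by minimality of `p₀`, some `b` lies in every other prime of `S` but not in `p₀`
  obtain ⟨b, hbS, hb₀⟩ : ∃ b ∈ (S.erase p₀).inf PrimeSpectrum.asIdeal, b ∉ p₀.asIdeal := by
    refine SetLike.not_le_iff_exists.1 fun hle => ?_
    obtain ⟨p, hp, hpp₀⟩ := p₀.isPrime.inf_le'.1 hle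
    exact Finset.ne_of_mem_erase hp (hmin.eq_of_le (mem_erase hp) hpp₀)
  obtain ⟨d, hd⟩ := SetLike.exists_not_mem_of_ne_top _ (hne p₀ hp₀)
  refine ⟨c + b • d, fun p hp hmem => ?_⟩
  rcases eq_or_ne p p₀ with rfl | h
  · exact hd (hsat p hp b hb₀ d (((U p).add_mem_iff_right (not_not.1 hc₀)).1 hmem))
  · have hp' : p ∈ S.erase p₀ := Finset.mem_erase.2 ⟨h, hp⟩
    have hb : b ∈ p.asIdeal := SetLike.le_def.1 (Finset.inf_le hp') hbS
    exact hc p hp' (((U p).add_mem_iff_left (hsmul p hp b hb d)).1 hmem)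

end PrimeAvoidance

section ResidueField

variable {A : Type*} [CommRing A] {ι : Type*} [Finite ι]

theorem Ideal.exists_smul_eq_algebraMap_comp (p : Ideal A) [p.IsPrime] (v : ι → p.ResidueField) :
    ∃ s ∉ p, ∃ w : ι → A, algebraMap A p.ResidueField s • v = algebraMap A p.ResidueField ∘ w := by
  have := Fintype.ofFinite ι
  obtain ⟨⟨b, hb⟩, hbv⟩ := IsLocalization.exist_integer_multiples (nonZeroDivisors (A ⧸ p))
    Finset.univ v
  choose c hc using fun i => hbv i (Finset.mem_univ i)
  obtain ⟨s, rfl⟩ := Ideal.Quotient.mk_surjective b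
  choose w hw using fun i => Ideal.Quotient.mk_surjective (c i)
  refine ⟨s, ?_, w, funext fun i => ?_⟩
  · rw [← Ideal.Quotient.eq_zero_iff_mem]
    exact nonZeroDivisors.ne_zero hb
  · rw [Pi.smul_apply, Function.comp_apply, ← Ideal.algebraMap_quotient_residueField_mk p (w i),
      hw, hc]
    rfl

theorem exists_forall_algebraMap_comp_notMem (S : Finset (PrimeSpectrum A))
    (V : (p : PrimeSpectrum A) → Submodule p.asIdeal.ResidueField (ι → p.asIdeal.ResidueField))
    (hV : ∀ p ∈ S, V p ≠ ⊤) :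
    ∃ d : ι → A, ∀ p ∈ S, algebraMap A p.asIdeal.ResidueField ∘ d ∉ V p := by
  let U p : Submodule A (ι → A) :=
    ((V p).restrictScalars A).comap (LinearMap.compLeft (Algebra.linearMap A _) ι)
  have mem_U {p z} : z ∈ U p ↔ algebraMap A p.asIdeal.ResidueField ∘ z ∈ V p := Iff.rfl
  have smul_mem_U {p a z} (ha : a ∉ p.asIdeal) : a • z ∈ U p ↔ z ∈ U p := by
    have hres : algebraMap A p.asIdeal.ResidueField a ≠ 0 := by simpa using ha
    have hmap : algebraMap A p.asIdeal.ResidueField ∘ (a • z) =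
        algebraMap A p.asIdeal.ResidueField a • (algebraMap A p.asIdeal.ResidueField ∘ z) :=
      funext fun i => by simp [Algebra.smul_def]
    rw [mem_U, mem_U, hmap, Submodule.smul_mem_iff _ hres]
  obtain ⟨d, hd⟩ := exists_forall_notMem_of_saturated S U
    (fun p _ a ha z => by
      rw [mem_U, show algebraMap A _ ∘ (a • z) = 0 from funext fun i => by
        simp [Algebra.smul_def, Ideal.algebraMap_residueField_eq_zero.2 ha]]
      exact zero_mem _)
    (fun p _ a ha z => (smul_mem_U ha).1)
    (fun p hp hU => hV p hp <| (Submodule.eq_top_iff'.2 fun v => by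
      obtain ⟨s, hs, w, hw⟩ := p.asIdeal.exists_smul_eq_algebraMap_comp v
      have hres : algebraMap A p.asIdeal.ResidueField s ≠ 0 := by simpa using hs
      rw [← Submodule.smul_mem_iff _ hres, hw]
      exact mem_U.1 (hU ▸ Submodule.mem_top)))
  exact ⟨d, fun p hp => mem_U.not.1 (hd p hp)⟩

end ResidueField

section AssociatedPrime

variable {A : Type*} [CommRing A] {q : Ideal A} [q.IsPrime] {x : A} {ι m n : Type*}

theorem algebraMap_comp_eq_zero_iff (hx : ∀ a, a * x = 0 ↔ a ∈ q) (z : ι → A) :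
    algebraMap A q.ResidueField ∘ z = 0 ↔ x • z = 0 := by
  simp only [funext_iff, Function.comp_apply, Pi.zero_apply, Pi.smul_apply, smul_eq_mul,
    Ideal.algebraMap_residueField_eq_zero, ← hx, mul_comm x]

variable [Fintype ι] [Fintype m]

theorem algebraMap_comp_mem_range_of_mulVec_eq_smul (hx : ∀ a, a * x = 0 ↔ a ∈ q)
    (ρ : Matrix ι m A) (hρ : LinearMap.ker ρ.mulVecLin = ⊥) {w : ι → A} {u : m → A}
    (hu : ρ *ᵥ u = x • w) :
    algebraMap A q.ResidueField ∘ w ∈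
      LinearMap.range (ρ.map (algebraMap A q.ResidueField)).mulVecLin := by
  set f := algebraMap A q.ResidueField
  -- `u` is killed by `q = ann x`, because `ρ` is injective
  have hqu : ∀ a ∈ q, a • u = 0 := fun a ha => LinearMap.ker_eq_bot.1 hρ <| by
    simp [hu, smul_smul, (hx a).2 ha]
  -- a functional `l` separating `w` from `im ρ` lifts to `l'` over `A` with
  -- `x (l' ⬝ w) = (l' ρ) ⬝ u = 0`, because the entries of `l' ρ` lie in `q`
  by_contra hw
  obtain ⟨l, hlρ, hlw⟩ := exists_vecMul_eq_zero_dotProduct_ne_zero _ hw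
  obtain ⟨s, hs, l', hl'⟩ := q.exists_smul_eq_algebraMap_comp l
  have hl'ρ : x • (l' ᵥ* ρ) = 0 := by
    rw [← algebraMap_comp_eq_zero_iff hx, f.comp_vecMul, ← hl', smul_vecMul, hlρ, smul_zero]
  have hxl'w : x * (l' ⬝ᵥ w) = 0 :=
    calc x * (l' ⬝ᵥ w) = l' ⬝ᵥ (ρ *ᵥ u) := by rw [hu, dotProduct_smul, smul_eq_mul]
      _ = (l' ᵥ* ρ) ⬝ᵥ u := dotProduct_mulVec ..
      _ = 0 := Finset.sum_eq_zero fun j _ => by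
        have hj : (l' ᵥ* ρ) j ∈ q := (hx _).1 (by simpa [mul_comm] using congrFun hl'ρ j)
        simpa using congrFun (hqu _ hj) j
  have : f (l' ⬝ᵥ w) = 0 := by
    rw [Ideal.algebraMap_residueField_eq_zero, ← hx, mul_comm, hxl'w]
  rw [f.map_dotProduct, ← hl', smul_dotProduct, smul_eq_mul] at this
  exact mul_ne_zero (by simpa [f] using hs) hlw this

theorem ker_mulVecLin_map_residueField_le_range (hx : ∀ a, a * x = 0 ↔ a ∈ q)
    (τ : Matrix n ι A) (ρ : Matrix ι m A)
    (hexact : LinearMap.ker τ.mulVecLin = LinearMap.range ρ.mulVecLin)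
    (hρ : LinearMap.ker ρ.mulVecLin = ⊥) :
    LinearMap.ker (τ.map (algebraMap A q.ResidueField)).mulVecLin ≤
      LinearMap.range (ρ.map (algebraMap A q.ResidueField)).mulVecLin := by
  set f := algebraMap A q.ResidueField
  intro v hv
  obtain ⟨s, hs, w, hw⟩ := q.exists_smul_eq_algebraMap_comp v
  have hτw : τ *ᵥ (x • w) = 0 := by
    rw [LinearMap.mem_ker, mulVecLin_apply] at hv
    rw [mulVec_smul, ← algebraMap_comp_eq_zero_iff hx, f.comp_mulVec, ← hw, mulVec_smul, hv,
      smul_zero]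
  obtain ⟨u, hu⟩ : x • w ∈ LinearMap.range ρ.mulVecLin := hexact ▸ hτw
  have hrange := algebraMap_comp_mem_range_of_mulVec_eq_smul hx ρ hρ hu
  rw [← hw] at hrange
  exact (Submodule.smul_mem_iff _ (by simpa [f] using hs)).1 hrange

theorem surjective_mulVecLin_map_residueField [IsNoetherianRing A] [Fintype n]
    (hq : IsAssociatedPrime q A) (τ : Matrix n ι A) (ρ : Matrix ι m A)
    (hexact : LinearMap.ker τ.mulVecLin = LinearMap.range ρ.mulVecLin)
    (hρ : LinearMap.ker ρ.mulVecLin = ⊥)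
    (hcard : Fintype.card n + Fintype.card m ≤ Fintype.card ι) :
    Function.Surjective (τ.map (algebraMap A q.ResidueField)).mulVecLin := by
  obtain ⟨-, x, hx⟩ := isAssociatedPrime_iff.1 hq
  have hx' (a : A) : a * x = 0 ↔ a ∈ q := by
    rw [hx, Submodule.mem_colon_singleton, Submodule.mem_bot, smul_eq_mul]
  have hker := ker_mulVecLin_map_residueField_le_range hx' τ ρ hexact hρ
  rw [← LinearMap.range_eq_top]
  refine Submodule.eq_top_of_finrank_eq (le_antisymm (Submodule.finrank_le _) ?_)
  have hτrank :=
    LinearMap.finrank_range_add_finrank_ker (τ.map (algebraMap A q.ResidueField)).mulVecLin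
  have hkerrank := Submodule.finrank_mono hker
  have hρrank := LinearMap.finrank_range_le (ρ.map (algebraMap A q.ResidueField)).mulVecLin
  simp only [Module.finrank_fintype_fun_eq_card] at hτrank hρrank ⊢
  omega

end AssociatedPrime

section ColumnSelection

variable {A : Type*} [CommRing A] {ι n : Type*} [Fintype ι] [Fintype n]

theorem exists_linearIndependent_residueField (S : Finset (PrimeSpectrum A))
    (m : PrimeSpectrum A) (τ : Matrix n ι A)
    (hτ : ∀ q ∈ S, Function.Surjective (τ.map (algebraMap A q.asIdeal.ResidueField)).mulVecLin)
    {k : ℕ} (hkn : k ≤ Fintype.card n) (hkι : k ≤ Fintype.card ι) :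
    ∃ c : Fin k → ι → A,
      (∀ q ∈ S, LinearIndependent q.asIdeal.ResidueField fun i =>
        τ.map (algebraMap A q.asIdeal.ResidueField) *ᵥ (algebraMap A _ ∘ c i)) ∧
      LinearIndependent m.asIdeal.ResidueField fun i =>
        algebraMap A m.asIdeal.ResidueField ∘ c i := by
  classical
  induction k with
  | zero => exact ⟨Fin.elim0, fun _ _ => linearIndependent_empty_type, linearIndependent_empty_type⟩
  | succ k ih =>
  obtain ⟨c, hcS, hcm⟩ := ih (by omega) (by omega)
  let red (p : PrimeSpectrum A) (z : ι → A) : ι → p.asIdeal.ResidueField :=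
    algebraMap A p.asIdeal.ResidueField ∘ z
  let τK (p : PrimeSpectrum A) := (τ.map (algebraMap A p.asIdeal.ResidueField)).mulVecLin
  let W (p : PrimeSpectrum A) :=
    Submodule.span p.asIdeal.ResidueField (Set.range (τK p ∘ red p ∘ c))
  -- if `m ∈ S`, avoiding `V m` also keeps the residues independent modulo `m`
  let V (p : PrimeSpectrum A) : Submodule _ (ι → p.asIdeal.ResidueField) :=
    if p ∈ S then (W p).comap (τK p) else Submodule.span _ (Set.range (red p ∘ c))
  have hV : ∀ p ∈ insert m S, V p ≠ ⊤ := by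
    intro p hp
    by_cases hpS : p ∈ S
    · simp only [V, if_pos hpS]
      rw [← Submodule.comap_top (τK p)]
      refine (Submodule.comap_injective_of_surjective (hτ p hpS)).ne ?_
      exact Submodule.span_range_ne_top_of_lt_finrank _ (by simpa using hkn)
    · simp only [V, if_neg hpS]
      exact Submodule.span_range_ne_top_of_lt_finrank _ (by simpa using hkι)
  obtain ⟨d, hd⟩ := exists_forall_algebraMap_comp_notMem (insert m S) V hV
  refine ⟨Fin.snoc c d, fun q hq => ?_, ?_⟩
  · refine LinearIndependent.comp_fin_snoc (τK q ∘ red q) (hcS q hq) fun hmem => ?_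
    exact hd q (Finset.mem_insert_of_mem hq) (by simp only [V, if_pos hq]; exact hmem)
  · refine LinearIndependent.comp_fin_snoc (red m) hcm fun hmem =>
      hd m (Finset.mem_insert_self _ _) ?_
    by_cases hm : m ∈ S
    · simp only [V, if_pos hm]
      refine Submodule.span_le.2 ?_ hmem
      rintro _ ⟨i, rfl⟩
      exact Submodule.subset_span ⟨i, rfl⟩
    · simpa only [V, if_neg hm] using hmem

end ColumnSelection

theorem exists_isUnit_det_fromCols {A : Type*} [CommRing A] [IsLocalRing A] {κ₁ κ₂ : Type*}
    [Fintype κ₁] [Fintype κ₂] [DecidableEq κ₁] [DecidableEq κ₂] (C : Matrix (κ₁ ⊕ κ₂) κ₁ A)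
    (hC : LinearIndependent (maximalIdeal A).ResidueField
      (C.map (algebraMap A (maximalIdeal A).ResidueField)).col) :
    ∃ D : Matrix (κ₁ ⊕ κ₂) κ₂ A, IsUnit (fromCols C D).det := by
  obtain ⟨w, hw⟩ := hC.exists_linearIndependent_sumElim (κ₂ := κ₂) (by simp)
  obtain ⟨D, hD⟩ := (maximalIdeal A).algebraMap_residueField_surjective.comp_left.comp_left w
  refine ⟨(Matrix.of D)ᵀ, ?_⟩
  have hcol : ((fromCols C (Matrix.of D)ᵀ).map (algebraMap A _)).col =
      Sum.elim (C.map (algebraMap A _)).col w := by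
    ext (j | j) i
    · rfl
    · exact congrFun (congrFun hD j) i
  exact notMem_maximalIdeal.1 ((maximalIdeal A).det_notMem_of_linearIndependent_col (hcol ▸ hw))

theorem mem_nonZeroDivisors_of_forall_notMem_associatedPrimes {A : Type*} [CommRing A]
    [IsNoetherianRing A] {a : A} (ha : ∀ q ∈ associatedPrimes A A, a ∉ q) :
    a ∈ nonZeroDivisors A := by
  by_contra h
  replace h : a ∈ (nonZeroDivisors A : Set A)ᶜ := h
  rw [← biUnion_associatedPrimes_eq_compl_nonZeroDivisors] at h
  obtain ⟨q, hq, haq⟩ := Set.mem_iUnion₂.1 h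
  exact ha q hq haq

theorem exists_base_change_det_regular_general
    (A : Type) [CommRing A] [IsLocalRing A] [IsNoetherianRing A]
    (M : Type) [AddCommGroup M] [Module A M]
    (n : ℕ) (τ₁ τ₂ ρ₁ ρ₂ : Matrix (Fin n) (Fin n) A)
    (p : (Fin n → A) →ₗ[A] M)
    (hres : IsFreeRes₂ A (fromCols τ₁ τ₂) (fromRows ρ₁ ρ₂) p) :
    ∃ P : Matrix (Fin n ⊕ Fin n) (Fin n ⊕ Fin n) A, IsUnit P.det ∧
      (∀ q ∈ associatedPrimes A A, (toCols₁ (fromCols τ₁ τ₂ * P)).det ∉ q) ∧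
      (toCols₁ (fromCols τ₁ τ₂ * P)).det ∈ nonZeroDivisors A := by
  obtain ⟨-, -, hexact, hρ⟩ := hres
  set τ := fromCols τ₁ τ₂
  let S : Finset (PrimeSpectrum A) :=
    ((associatedPrimes.finite A A).preimage fun _ _ _ _ => PrimeSpectrum.ext).toFinset
  have mem_S {q : PrimeSpectrum A} : q ∈ S ↔ q.asIdeal ∈ associatedPrimes A A :=
    Set.Finite.mem_toFinset _
  obtain ⟨c, hcS, hcm⟩ := exists_linearIndependent_residueField S (closedPoint A) τ
    (fun q hq => surjective_mulVecLin_map_residueField (mem_S.1 hq) τ _ hexact hρ (by simp))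
    (k := n) (by simp) (by simp)
  obtain ⟨D, hD⟩ := exists_isUnit_det_fromCols (Matrix.of c)ᵀ hcm
  have hdet : ∀ q ∈ associatedPrimes A A, (toCols₁ (τ * fromCols (Matrix.of c)ᵀ D)).det ∉ q := by
    intro q hq
    have := hq.isPrime
    rw [mul_fromCols, toCols₁_fromCols]
    refine q.det_notMem_of_linearIndependent_col ?_
    convert hcS ⟨q, hq.isPrime⟩ (mem_S.2 hq) using 1
    ext i j
    simp [Matrix.col_apply, mul_apply, mulVec, dotProduct]
  exact ⟨fromCols (Matrix.of c)ᵀ D, hD, hdet,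
    mem_nonZeroDivisors_of_forall_notMem_associatedPrimes hdet⟩

/-- **Lemma 3.2 (regularizing a minor).**  Given an exact sequence
`0 → Aⁿ →(ρ₁; ρ₂) A^{2n} →(τ₁ τ₂) Aⁿ → M → 0` over a Cohen-Macaulay Noetherian local ring
`A` (not necessarily a domain), there is a base change `P ∈ GL_{2n}(A)` such that for
`(τ₁' τ₂') = (τ₁ τ₂) · P` the determinant `det τ₁'` avoids every associated prime of `A`,
i.e. `det τ₁'` is a nonzerodivisor on `A`. -/
theorem exists_base_change_det_regular
    (A : Type) [CommRing A] [IsLocalRing A] [IsNoetherianRing A] (hCM : IsCMLocalRing A)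
    (M : Type) [AddCommGroup M] [Module A M]
    (n : ℕ) (τ₁ τ₂ ρ₁ ρ₂ : Matrix (Fin n) (Fin n) A)
    (p : (Fin n → A) →ₗ[A] M)
    (hres : IsFreeRes₂ A (fromCols τ₁ τ₂) (fromRows ρ₁ ρ₂) p) :
    ∃ P : Matrix (Fin n ⊕ Fin n) (Fin n ⊕ Fin n) A, IsUnit P.det ∧
      (∀ q ∈ associatedPrimes A A, (toCols₁ (fromCols τ₁ τ₂ * P)).det ∉ q) ∧
      (toCols₁ (fromCols τ₁ τ₂ * P)).det ∈ nonZeroDivisors A :=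
  exists_base_change_det_regular_general A M n τ₁ τ₂ ρ₁ ρ₂ p hres
end

section
/- Let A be a Cohen-Macaulay Noetherian local ring and R a finite A-module with minimal free resolution 0 → F₂ →ψ F₁ →φ F₀ →p R → 0, with depth(Ann_A R, A) = 2. Let e ∈ R be the image under p of the generator of F₀ corresponding to the first row of φ, let φ' be φ with its first row erased and I' its zeroth Fitting ideal, and assume depth(I', A) ≥ 4. Set A_Y := A/Ann_A R. Then I' ⊆ Ann_A(R/A_Y e), and there exists an element d in the image I'·A_Y of I' in A_Y that is a nonzerodivisor on R (hence also on A_Y) and satisfies d·R ⊆ A_Y·e; i.e. R is a finite birational A_Y-module. -/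
open Matrix IsLocalRing

def depthEq (A : Type) [CommRing A] (I : Ideal A) (M : Type) [AddCommGroup M] [Module A M]
    (n : ℕ) : Prop :=
  depthGE A I M n ∧ ¬ depthGE A I M (n + 1)

def maxMinors (A : Type) [CommRing A] {m : ℕ} {J : Type} [Fintype J] [DecidableEq J]
    (M : Matrix (Fin m) J A) : Ideal A :=
  Ideal.span {x | ∃ c : Fin m → J, Function.Injective c ∧ x = (M.submatrix id c).det}

/-!
The first claim is Cramer's rule: the columns of `φ'` are relations among the images in `R / A e`
of the remaining basis vectors, so every maximal minor `det B` of `φ'` kills `R / A e`, since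
`det B • v = B (adj B v)`.

For the second claim it suffices, by prime avoidance over the finitely many associated primes
of `R`, that no nonzero element of `R` is killed by `I'`. Pick an `A`-regular sequence `x, y, z`
in `I'`; it stays regular on the free modules `Fᵢ`. If `r = p v` is killed by `x, y, z`, lift
`x v, y v, z v` to `a, b, c ∈ F₁`; the syzygies `y a - x b`, `z a - x c`, `z b - y c` lift to `F₂`
and satisfy the Koszul relation there. Regularity of `z` modulo `(x, y)` on `F₂`, then of `y`
modulo `x` on `F₁`, then of `x` on `F₀`, shows successively that `v ∈ im φ`, i.e. `r = 0`.
-/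

namespace Matrix

variable {A N : Type*} [CommRing A] [AddCommGroup N] [Module A N]

lemma det_smul_eq_zero_of_comp_mulVecLin_eq_zero {n : Type*} [Fintype n] [DecidableEq n]
    (B : Matrix n n A) {L : (n → A) →ₗ[A] N} (h : L ∘ₗ B.mulVecLin = 0) (v : n → A) :
    B.det • L v = 0 := by
  have : B.det • v = B *ᵥ (B.adjugate *ᵥ v) := by
    rw [mulVec_mulVec, mul_adjugate, smul_mulVec, one_mulVec]
  rw [← map_smul, this]
  exact LinearMap.congr_fun h _

lemma det_submatrix_smul_eq_zero_of_comp_mulVecLin_eq_zero {m J : Type*} [Fintype m]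
    [DecidableEq m] [Fintype J] [DecidableEq J] (M : Matrix m J A) (c : m → J)
    {L : (m → A) →ₗ[A] N} (h : L ∘ₗ M.mulVecLin = 0) (v : m → A) :
    (M.submatrix id c).det • L v = 0 := by
  refine det_smul_eq_zero_of_comp_mulVecLin_eq_zero _ ?_ v
  have : M * (1 : Matrix J J A).submatrix id c = M.submatrix id c :=
    mul_submatrix_one (Equiv.refl J) c M
  rw [← this, mulVecLin_mul, ← LinearMap.comp_assoc, h, LinearMap.zero_comp]

end Matrix

section Fitting

variable {A : Type} [CommRing A] {N : Type*} [AddCommGroup N] [Module A N]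

theorem maxMinors_le_annihilator {m : ℕ} {J : Type} [Fintype J] [DecidableEq J]
    (M : Matrix (Fin m) J A) {L : (Fin m → A) →ₗ[A] N} (hL : Function.Surjective L)
    (h : L ∘ₗ M.mulVecLin = 0) : maxMinors A M ≤ Module.annihilator A N := by
  refine Ideal.span_le.mpr ?_
  rintro _ ⟨c, -, rfl⟩
  refine Module.mem_annihilator.mpr fun n => ?_
  obtain ⟨v, rfl⟩ := hL n
  exact M.det_submatrix_smul_eq_zero_of_comp_mulVecLin_eq_zero c h v

theorem maxMinors_submatrix_succ_le_annihilator {n : ℕ} {J : Type} [Fintype J] [DecidableEq J]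
    (φ : Matrix (Fin (n + 1)) J A) {p : (Fin (n + 1) → A) →ₗ[A] N}
    (hp : Function.Surjective p) (hφ : p ∘ₗ φ.mulVecLin = 0) :
    maxMinors A (φ.submatrix Fin.succ id) ≤
      Module.annihilator A (N ⧸ Submodule.span A {p (Pi.single 0 1)}) := by
  set S := Submodule.span A {p (Pi.single 0 1)}
  let L : (Fin n → A) →ₗ[A] N ⧸ S :=
    Fintype.linearCombination A fun i => S.mkQ (p (Pi.single i.succ 1))
  have hfactor : S.mkQ ∘ₗ p = L ∘ₗ LinearMap.funLeft A A Fin.succ := by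
    refine LinearMap.pi_ext' fun i => LinearMap.ext_ring ?_
    cases i using Fin.cases with
    | zero =>
      have : LinearMap.funLeft A A Fin.succ (Pi.single 0 1 : Fin (n + 1) → A) = 0 := by
        ext j; simp [LinearMap.funLeft_apply, Fin.succ_ne_zero]
      simp only [LinearMap.coe_comp, Function.comp_apply, LinearMap.coe_single,
        Submodule.mkQ_apply, this, map_zero, Submodule.Quotient.mk_eq_zero]
      exact Submodule.mem_span_singleton_self _
    | succ j =>
      have : LinearMap.funLeft A A Fin.succ (Pi.single j.succ 1 : Fin (n + 1) → A) =
          Pi.single j 1 := by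
        ext k; simp [LinearMap.funLeft_apply, Pi.single_apply]
      simp [this, L]
  refine maxMinors_le_annihilator _ (L := L) ?_ ?_
  · intro q
    obtain ⟨v, rfl⟩ := (S.mkQ_surjective.comp hp) q
    exact ⟨_, (LinearMap.congr_fun hfactor v).symm⟩
  · have : (φ.submatrix Fin.succ id).mulVecLin =
        LinearMap.funLeft A A Fin.succ ∘ₗ φ.mulVecLin := rfl
    rw [this, ← LinearMap.comp_assoc, ← hfactor, LinearMap.comp_assoc, hφ, LinearMap.comp_zero]

end Fitting

open RingTheory.Sequence

section RegularSequence

variable {A M : Type*} [CommRing A] [AddCommGroup M] [Module A M]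

lemma exists_eq_smul_of_smul_eq_smul {x y : A} (h : IsSMulRegular (QuotSMulTop x M) y)
    {a b : M} (hab : y • a = x • b) : ∃ c, a = x • c := by
  have : (Submodule.Quotient.mk a : QuotSMulTop x M) = 0 := by
    refine h.right_eq_zero_of_smul ?_
    rw [← Submodule.Quotient.mk_smul, hab, Submodule.Quotient.mk_eq_zero]
    exact Submodule.smul_mem_pointwise_smul b x ⊤ trivial
  obtain ⟨c, -, hc⟩ := (Submodule.mem_smul_pointwise_iff_exists _ _ _).mp
    ((Submodule.Quotient.mk_eq_zero _).mp this)
  exact ⟨c, hc.symm⟩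

lemma exists_eq_smul_add_smul_of_smul_eq {x y z : A}
    (h : IsSMulRegular (QuotSMulTop y (QuotSMulTop x M)) z)
    {s t u : M} (hstu : z • s = y • t + x • u) : ∃ α β, s = x • α + y • β := by
  have hmod : z • (Submodule.Quotient.mk s : QuotSMulTop x M) = y • Submodule.Quotient.mk t := by
    rw [← Submodule.Quotient.mk_smul, ← Submodule.Quotient.mk_smul, Submodule.Quotient.eq, hstu,
      add_sub_cancel_left]
    exact Submodule.smul_mem_pointwise_smul u x ⊤ trivial
  obtain ⟨c, hc⟩ := exists_eq_smul_of_smul_eq_smul h hmod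
  obtain ⟨β, rfl⟩ := Submodule.Quotient.mk_surjective _ c
  rw [← Submodule.Quotient.mk_smul, Submodule.Quotient.eq] at hc
  obtain ⟨α, -, hα⟩ := (Submodule.mem_smul_pointwise_iff_exists _ _ _).mp hc
  exact ⟨α, β, by rw [hα, sub_add_cancel]⟩

lemma RingTheory.Sequence.IsWeaklyRegular.isWeaklyRegular_of_flat {F : Type*} [AddCommGroup F]
    [Module A F] [Module.Flat A F] {rs : List A} (h : IsWeaklyRegular A rs) :
    IsWeaklyRegular F rs :=
  ((TensorProduct.lid A F).isWeaklyRegular_congr rs).mp h.isWeaklyRegular_rTensor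

end RegularSequence

theorem eq_zero_of_smul_eq_zero_of_resolution {A : Type*} [CommRing A]
    {F₀ F₁ F₂ R : Type*} [AddCommGroup F₀] [Module A F₀] [AddCommGroup F₁] [Module A F₁]
    [AddCommGroup F₂] [Module A F₂] [AddCommGroup R] [Module A R]
    {ψ : F₂ →ₗ[A] F₁} {φ : F₁ →ₗ[A] F₀} {p : F₀ →ₗ[A] R}
    (hψ : Function.Injective ψ) (hψφ : Function.Exact ψ φ) (hφp : Function.Exact φ p)
    (hp : Function.Surjective p) {x y z : A} (h₀ : IsSMulRegular F₀ x)
    (h₁ : IsSMulRegular (QuotSMulTop x F₁) y)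
    (h₂ : IsSMulRegular (QuotSMulTop y (QuotSMulTop x F₂)) z)
    {r : R} (hx : x • r = 0) (hy : y • r = 0) (hz : z • r = 0) : r = 0 := by
  obtain ⟨v, rfl⟩ := hp r
  have lift₀ (t : A) (ht : t • p v = 0) : ∃ a, φ a = t • v :=
    (hφp (t • v)).mp (by rwa [map_smul])
  obtain ⟨a, ha⟩ := lift₀ x hx
  obtain ⟨b, hb⟩ := lift₀ y hy
  obtain ⟨c, hc⟩ := lift₀ z hz
  have lift₁ {s t : A} {a b : F₁} (ha : φ a = s • v) (hb : φ b = t • v) :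
      ∃ w, ψ w = t • a - s • b :=
    (hψφ _).mp (by rw [map_sub, map_smul, map_smul, ha, hb, smul_comm, sub_self])
  obtain ⟨s₁, hs₁⟩ := lift₁ ha hb
  obtain ⟨s₂, hs₂⟩ := lift₁ ha hc
  obtain ⟨s₃, hs₃⟩ := lift₁ hb hc
  have koszul : z • s₁ = y • s₂ + x • (-s₃) := hψ <| by
    simp only [map_add, map_smul, map_neg, hs₁, hs₂, hs₃]
    module
  obtain ⟨α, β, hαβ⟩ := exists_eq_smul_add_smul_of_smul_eq h₂ koszul
  obtain ⟨γ, hγ⟩ : ∃ γ, a - ψ β = x • γ := by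
    refine exists_eq_smul_of_smul_eq_smul h₁ (b := b + ψ α) ?_
    rw [hαβ, map_add, map_smul, map_smul] at hs₁
    linear_combination (norm := module) -hs₁
  have hv : v = φ γ := h₀ <| by
    show x • v = x • φ γ
    rw [← ha, ← map_smul, ← hγ, map_sub, hψφ.apply_apply_eq_zero, sub_zero]
  rw [hv, hφp.apply_apply_eq_zero]

section RegularElement

variable {A M : Type*} [CommRing A] [AddCommGroup M] [Module A M]

lemma exists_mem_isSMulRegular_of_forall_smul_eq_zero [IsNoetherianRing A] [Module.Finite A M]
    {I : Ideal A} (h : ∀ m : M, (∀ a ∈ I, a • m = 0) → m = 0) :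
    ∃ d ∈ I, IsSMulRegular M d := by
  have : Subsingleton (A ⧸ I →ₗ[A] M) := by
    refine subsingleton_of_forall_eq 0 fun f => Submodule.linearMap_qext _ (LinearMap.ext_ring ?_)
    refine h _ fun a ha => ?_
    rw [LinearMap.comp_apply, ← map_smul, Submodule.mkQ_apply, ← Submodule.Quotient.mk_smul,
      smul_eq_mul, mul_one, (Submodule.Quotient.mk_eq_zero I).mpr ha, map_zero]
  simpa [Ideal.annihilator_quotient (I := I)] using IsSMulRegular.subsingleton_linearMap_iff.mp this

lemma IsSMulRegular.quotient_annihilator {d : A} (h : IsSMulRegular M d) :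
    IsSMulRegular (A ⧸ Module.annihilator A M) (Ideal.Quotient.mk (Module.annihilator A M) d) := by
  refine IsSMulRegular.of_right_eq_zero_of_smul fun q hq => ?_
  obtain ⟨a, rfl⟩ := Ideal.Quotient.mk_surjective q
  rw [smul_eq_mul, ← map_mul, Ideal.Quotient.eq_zero_iff_mem, Module.mem_annihilator] at hq
  rw [Ideal.Quotient.eq_zero_iff_mem, Module.mem_annihilator]
  exact fun m => h.right_eq_zero_of_smul (by rw [smul_smul, hq m])

end RegularElement

theorem finite_birational_module_general
    (A : Type) [CommRing A] [IsNoetherianRing A]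
    (R : Type) [AddCommGroup R] [Module A R] [Module.Finite A R]
    (n₀ n₁ n₂ : ℕ)
    (φ : Matrix (Fin (n₀ + 1)) (Fin n₁) A) (ψ : Matrix (Fin n₁) (Fin n₂) A)
    (p : (Fin (n₀ + 1) → A) →ₗ[A] R)
    (hres : IsFreeRes₂ A φ ψ p)
    (hheart : depthGE A (maxMinors A (φ.submatrix Fin.succ id)) A 4) :
    maxMinors A (φ.submatrix Fin.succ id) ≤
      Module.annihilator A (R ⧸ Submodule.span A {p (Pi.single 0 1)}) ∧
    ∃ d ∈ maxMinors A (φ.submatrix Fin.succ id),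
      IsSMulRegular R d ∧
      IsSMulRegular (A ⧸ Module.annihilator A R)
        ((Ideal.Quotient.mk (Module.annihilator A R)) d) ∧
      ∀ x : R, d • x ∈ Submodule.span A {p (Pi.single 0 1)} := by
  obtain ⟨hp, hφ, hψ, hψ_inj⟩ := hres
  have hann := maxMinors_submatrix_succ_le_annihilator φ hp
    (LinearMap.range_le_ker_iff.mp hφ.symm.le)
  obtain ⟨rs, hlen, hmem, hreg⟩ := hheart
  obtain ⟨x, y, z, w, rfl⟩ : ∃ x y z w, rs = [x, y, z, w] := by
    match rs, hlen with
    | [x, y, z, w], _ => exact ⟨x, y, z, w, rfl⟩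
  have hfree (n : ℕ) : IsWeaklyRegular (Fin n → A) [x, y, z, w] :=
    hreg.toIsWeaklyRegular.isWeaklyRegular_of_flat
  simp only [isWeaklyRegular_cons_iff] at hfree
  have htorsionfree (r : R) (hr : ∀ a ∈ maxMinors A (φ.submatrix Fin.succ id), a • r = 0) :
      r = 0 :=
    eq_zero_of_smul_eq_zero_of_resolution (LinearMap.ker_eq_bot.mp hψ_inj)
      (LinearMap.exact_iff.mpr hψ) (LinearMap.exact_iff.mpr hφ) hp (hfree _).1 (hfree _).2.1
      (hfree _).2.2.1 (hr x (hmem x (by simp))) (hr y (hmem y (by simp)))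
      (hr z (hmem z (by simp)))
  obtain ⟨d, hdI, hd⟩ := exists_mem_isSMulRegular_of_forall_smul_eq_zero htorsionfree
  refine ⟨hann, d, hdI, hd, IsSMulRegular.quotient_annihilator hd, fun r => ?_⟩
  rw [Submodule.annihilator_quotient] at hann
  exact Submodule.mem_colon.mp (hann hdI) r trivial

/-- **(From the proof of Theorem 1.1: `R` is a finite birational `A_Y`-module.)**
With `e := p(first generator)`, the matrix `φ'` (`φ` with first row erased) presents
`R/A_Y e`, so `I' ⊆ Ann_A (R/A_Y e)`; and since `depth(I', R) ≥ 2` there is `d ∈ I'` whose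
action on `R` (and hence its image in `A_Y = A ⧸ Ann_A R`) is a nonzerodivisor, while
`d · R ⊆ A_Y · e` (note that the `A_Y`-submodule generated by `e` coincides with the
`A`-submodule generated by `e`). -/
theorem finite_birational_module
    (A : Type) [CommRing A] [IsLocalRing A] [IsNoetherianRing A] (hCM : IsCMLocalRing A)
    (R : Type) [AddCommGroup R] [Module A R] [Module.Finite A R]
    (n₀ n₁ n₂ : ℕ)
    (φ : Matrix (Fin (n₀ + 1)) (Fin n₁) A) (ψ : Matrix (Fin n₁) (Fin n₂) A)
    (p : (Fin (n₀ + 1) → A) →ₗ[A] R)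
    (hres : IsFreeRes₂ A φ ψ p)
    (hmin : (∀ i j, φ i j ∈ maximalIdeal A) ∧ ∀ i j, ψ i j ∈ maximalIdeal A)
    (hdepthAnn : depthEq A (Module.annihilator A R) A 2)
    (hheart : depthGE A (maxMinors A (φ.submatrix Fin.succ id)) A 4) :
    maxMinors A (φ.submatrix Fin.succ id) ≤
      Module.annihilator A (R ⧸ Submodule.span A {p (Pi.single 0 1)}) ∧
    ∃ d ∈ maxMinors A (φ.submatrix Fin.succ id),
      IsSMulRegular R d ∧
      IsSMulRegular (A ⧸ Module.annihilator A R)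
        ((Ideal.Quotient.mk (Module.annihilator A R)) d) ∧
      ∀ x : R, d • x ∈ Submodule.span A {p (Pi.single 0 1)} :=
  finite_birational_module_general A R n₀ n₁ n₂ φ ψ p hres hheart
end

section
/- Let B be a commutative ring, M a B-module, d ∈ B an element that is a nonzerodivisor on M, and e ∈ M such that d·M ⊆ B·e. Then there is at most one commutative B-algebra multiplication on M having e as identity element; i.e. if μ₁ and μ₂ are two B-bilinear commutative associative multiplications on M with identity e, then μ₁ = μ₂. -/
/-- **(Uniqueness of the algebra structure on a finite birational module.)**
Let `B` be a commutative ring, `M` a `B`-module, `d ∈ B` a nonzerodivisor on `M` and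
`e ∈ M` with `d • M ⊆ B • e`.  Then there is at most one commutative `B`-bilinear
associative multiplication on `M` with identity element `e`. -/
theorem mul_unique_of_birational
    (B : Type) [CommRing B] (M : Type) [AddCommGroup M] [Module B M]
    (d : B) (e : M)
    (hreg : IsSMulRegular M d)
    (hbir : ∀ x : M, d • x ∈ Submodule.span B {e})
    (μ₁ μ₂ : M →ₗ[B] M →ₗ[B] M)
    (hcomm₁ : ∀ x y : M, μ₁ x y = μ₁ y x)
    (hassoc₁ : ∀ x y z : M, μ₁ (μ₁ x y) z = μ₁ x (μ₁ y z))
    (hone₁ : ∀ x : M, μ₁ e x = x)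
    (hcomm₂ : ∀ x y : M, μ₂ x y = μ₂ y x)
    (hassoc₂ : ∀ x y z : M, μ₂ (μ₂ x y) z = μ₂ x (μ₂ y z))
    (hone₂ : ∀ x : M, μ₂ e x = x) :
    μ₁ = μ₂ := by
  ext x y
  apply hreg
  obtain ⟨b, hb⟩ := Submodule.mem_span_singleton.mp (hbir x)
  calc d • μ₁ x y = μ₁ (d • x) y := by rw [map_smul]; rfl
    _ = b • y := by rw [← hb, map_smul, LinearMap.smul_apply, hone₁]
    _ = μ₂ (d • x) y := by rw [← hb, map_smul, LinearMap.smul_apply, hone₂]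
    _ = d • μ₂ x y := by rw [map_smul]; rfl
end

section
/- Let B be a commutative ring, R a commutative B-algebra containing B with a nonzerodivisor d ∈ B on R such that d·R ⊆ B (so B ⊆ R ⊆ B[d⁻¹]), and let C := {a ∈ B : a·R ⊆ B} be the conductor, which is an ideal of both B and R. Then Hom_B(C, C) = Hom_B(C, B): every B-linear map ξ : C → B, viewed as multiplication by an element of B[d⁻¹], carries C into C. -/
/-- The conductor of the `B`-algebra `R` into `B`: the set of `a ∈ B` with `a • R ⊆ B`
(i.e. `a · r` lies in the image of `B` for every `r ∈ R`).  It is an ideal of `B`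
(and also an ideal of `R`). -/
def conductorIdeal (B R : Type) [CommRing B] [CommRing R] [Algebra B R] : Ideal B where
  carrier := {a : B | ∀ r : R, ∃ b : B, a • r = algebraMap B R b}
  add_mem' := by
    intro x y hx hy r
    obtain ⟨b, hb⟩ := hx r
    obtain ⟨c, hc⟩ := hy r
    exact ⟨b + c, by rw [add_smul, hb, hc, map_add]⟩
  zero_mem' := by
    intro r
    exact ⟨0, by simp⟩
  smul_mem' := by
    intro c x hx r
    obtain ⟨b, hb⟩ := hx r
    refine ⟨c * b, ?_⟩
    rw [smul_eq_mul, mul_smul, hb, map_mul, ← Algebra.smul_def]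

/-- **(Hom of the conductor into the base.)**  Let `B ⊆ R ⊆ B[d⁻¹]`, i.e. `R` is a
commutative `B`-algebra with injective structure map, `d ∈ B` a nonzerodivisor on `R`
with `d · R ⊆ B`.  Let `C = {a ∈ B : a·R ⊆ B}` be the conductor.  Then
`Hom_B(C, C) = Hom_B(C, B)`: every `B`-linear map `ξ : C → B` carries `C` into `C`. -/
theorem hom_conductor_eq_end_conductor
    (B R : Type) [CommRing B] [CommRing R] [Algebra B R]
    (hinj : Function.Injective (algebraMap B R))
    (d : B)
    (hreg : IsSMulRegular R d)
    (hd : d ∈ conductorIdeal B R) :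
    ∀ ξ : (conductorIdeal B R) →ₗ[B] B, ∀ c : conductorIdeal B R,
      ξ c ∈ conductorIdeal B R := by
  intro ξ c r
  -- swap lemma: (u:B) * ξ v = (v:B) * ξ u
  have swap : ∀ u v : conductorIdeal B R, (u : B) * ξ v = (v : B) * ξ u := by
    intro u v
    have h : (u : B) • v = (v : B) • u := Subtype.ext (mul_comm (u : B) (v : B))
    calc (u : B) * ξ v = ξ ((u : B) • v) := (map_smul ξ _ _).symm
      _ = ξ ((v : B) • u) := by rw [h]
      _ = (v : B) * ξ u := map_smul ξ _ _
  obtain ⟨bc, hbc⟩ := c.2 r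
  have hbcC : bc ∈ conductorIdeal B R := by
    intro r'
    obtain ⟨b'', hb''⟩ := c.2 (r * r')
    refine ⟨b'', ?_⟩
    calc bc • r' = algebraMap B R bc * r' := Algebra.smul_def _ _
      _ = ((c : B) • r) * r' := by rw [hbc]
      _ = (c : B) • (r * r') := by rw [smul_mul_assoc]
      _ = algebraMap B R b'' := hb''
  refine ⟨ξ ⟨bc, hbcC⟩, ?_⟩
  apply hreg
  have key1 : d * ξ c = (c : B) * ξ ⟨d, hd⟩ := swap ⟨d, hd⟩ c
  have key2 : d * ξ ⟨bc, hbcC⟩ = bc * ξ ⟨d, hd⟩ := swap ⟨d, hd⟩ ⟨bc, hbcC⟩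
  calc d • (ξ c • r) = (d * ξ c) • r := by rw [smul_smul]
    _ = ((c : B) * ξ ⟨d, hd⟩) • r := by rw [key1]
    _ = ξ ⟨d, hd⟩ • ((c : B) • r) := by rw [mul_comm, mul_smul]
    _ = ξ ⟨d, hd⟩ • algebraMap B R bc := by rw [hbc]
    _ = algebraMap B R (ξ ⟨d, hd⟩ * bc) := by
        rw [map_mul, ← Algebra.smul_def]
    _ = algebraMap B R (d * ξ ⟨bc, hbcC⟩) := by rw [key2, mul_comm]
    _ = d • algebraMap B R (ξ ⟨bc, hbcC⟩) := by
        rw [map_mul, ← Algebra.smul_def]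
end

section
/- Let B be a commutative ring, d ∈ B, and R a commutative B-algebra such that d·R ⊆ B·1_R inside R. Let M be an R-module on which d acts as a nonzerodivisor, and let u : R → M be a B-linear map. Then u is R-linear: u(s·r) = s·u(r) for all s, r ∈ R. -/
/-- **(Automatic `R`-linearity.)**  Let `B` be a commutative ring, `R` a commutative
`B`-algebra with an element `d ∈ B` such that `d · R ⊆ B · 1_R` (so `R` sits between `B`
and `B[d⁻¹]`), and let `M` be an `R`-module on which `d` acts as a nonzerodivisor.
Then every `B`-linear map `u : R → M` is automatically `R`-linear. -/
theorem linearMap_is_R_linear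
    (B R : Type) [CommRing B] [CommRing R] [Algebra B R]
    (d : B)
    (hdR : ∀ s : R, ∃ a : B, d • s = algebraMap B R a)
    (M : Type) [AddCommGroup M] [Module B M] [Module R M] [IsScalarTower B R M]
    (hreg : IsSMulRegular M d)
    (u : R →ₗ[B] M) :
    ∀ s r : R, u (s * r) = s • u r := by
  intro s r
  obtain ⟨a, ha⟩ := hdR s
  apply hreg
  have h1 : d • (s * r) = a • r := by
    rw [← smul_mul_assoc, ha, ← Algebra.smul_def]
  calc d • u (s * r) = u (d • (s * r)) := (u.map_smul d _).symm
    _ = u (a • r) := by rw [h1]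
    _ = a • u r := u.map_smul a r
    _ = algebraMap B R a • u r := by rw [algebraMap_smul]
    _ = (d • s) • u r := by rw [ha]
    _ = d • s • u r := smul_assoc d s (u r)
end
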